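/- Let K ⊆ ℝ^d be a compact set with |K| > 0, let {B_j}_{j≥0} be a hierarchical partition of K, and let J ≥ 0 be an integer. Define the cut-off system X({B_j}_{j=0}^J) = {φ_0} ∪ ∪_{j=0}^{J−1} ∪_{B∈B_j} Ψ_{j,B}. Then X({B_j}_{j=0}^J) is a tight frame (with frame constant 1) for V_J = span{χ_B : B ∈ B_J}: for every f ∈ V_J, ‖f‖² = |⟨f, φ_0⟩|² + Σ_{j=0}^{J−1} Σ_{B∈B_j} Σ_{1≤ℓ_1<ℓ_2≤c_B} |⟨f, ψ_{j,B}^{(ℓ_1,ℓ_2)}⟩|². -/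

import Mathlib

open MeasureTheory Filter

/-- A hierarchical partition of a set `K`. -/
structure HierarchicalPartition (X : Type*) [MeasureSpace X] [PseudoEMetricSpace X]
    (K : Set X) where
  part : ℕ → Finset (Set X)
  root : part 0 = {K}
  cover : ∀ j : ℕ, ⋃ B ∈ part j, B = K
  measurableSet : ∀ j : ℕ, ∀ B ∈ part j, MeasurableSet B
  pos : ∀ j : ℕ, ∀ B ∈ part j, 0 < volume B
  null_inter : ∀ j : ℕ, ∀ B ∈ part j, ∀ B' ∈ part j, B ≠ B' → volume (B ∩ B') = 0
  numChild : ℕ → Set X → ℕ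
  child : ℕ → Set X → ℕ → Set X
  one_le_numChild : ∀ j : ℕ, ∀ B ∈ part j, 1 ≤ numChild j B
  child_mem : ∀ j : ℕ, ∀ B ∈ part j, ∀ ℓ < numChild j B, child j B ℓ ∈ part (j + 1)
  child_ne : ∀ j : ℕ, ∀ B ∈ part j, ∀ ℓ₁ < numChild j B, ∀ ℓ₂ < numChild j B,
    ℓ₁ ≠ ℓ₂ → child j B ℓ₁ ≠ child j B ℓ₂
  child_union : ∀ j : ℕ, ∀ B ∈ part j, B = ⋃ ℓ ∈ Finset.range (numChild j B), child j B ℓ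
  density : Tendsto (fun j : ℕ => (part j).sup fun B => EMetric.diam B) atTop (nhds 0)

/-- `γ_C = χ_C / √|C|`. -/
noncomputable def gammaFn {X : Type*} [MeasureSpace X] (C : Set X) : X → ℝ :=
  C.indicator fun _ => (Real.sqrt (volume C).toReal)⁻¹

/-- `ψ^{(C,C')} = √(|C'|/|B|) γ_C − √(|C|/|B|) γ_{C'}` for sub-blocks `C, C'` of `B`. -/
noncomputable def psiFn {X : Type*} [MeasureSpace X] (B C C' : Set X) : X → ℝ :=
  fun x =>
    Real.sqrt ((volume C').toReal / (volume B).toReal) * gammaFn C x -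
      Real.sqrt ((volume C).toReal / (volume B).toReal) * gammaFn C' x

/-- `V_J = span{χ_B : B ∈ B_J}`, viewed inside `L²(K)`. -/
noncomputable def Vspace {X : Type*} [MeasureSpace X] [PseudoEMetricSpace X] {K : Set X}
    (P : HierarchicalPartition X K) (j : ℕ) :
    Submodule ℝ (Lp ℝ 2 (volume.restrict K)) :=
  Submodule.span ℝ
    {g : Lp ℝ 2 (volume.restrict K) |
      ∃ B ∈ P.part j, (g : X → ℝ) =ᵐ[volume.restrict K] B.indicator fun _ => (1 : ℝ)}

/-!
Write `E_j f = ∑_{B ∈ B_j} (∫_B f)² / |B|` for the squared norm of the orthogonal projection of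
`f` onto `V_j`. On one block `B` whose children have measures `m_ℓ` and integrals `t_ℓ = ∫_{B_ℓ} f`,
Lagrange's identity gives
`∑_{ℓ₁ < ℓ₂} ⟨f, ψ^{(ℓ₁,ℓ₂)}⟩² = ∑_ℓ t_ℓ² / m_ℓ - (∑_ℓ t_ℓ)² / ∑_ℓ m_ℓ`,
so the coefficients of level `j` add up to `E_{j+1} f - E_j f`, and their sum over `j < J`
telescopes to `E_J f - E_0 f`. Finally `E_0 f = ⟨f, φ₀⟩²`, and `E_J f = ‖f‖²` because an element
of `V_J` is a.e. constant on every block of `B_J`.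
-/

open scoped Function

theorem Finset.sum_range_sum_range_mul_sub_mul_sq (n : ℕ) (a b : ℕ → ℝ) :
    ∑ j ∈ Finset.range n, ∑ i ∈ Finset.range j, (a j * b i - a i * b j) ^ 2 =
      (∑ i ∈ Finset.range n, a i ^ 2) * (∑ i ∈ Finset.range n, b i ^ 2) -
        (∑ i ∈ Finset.range n, a i * b i) ^ 2 := by
  induction n with
  | zero => simp
  | succ n ih =>
    have hlast : ∑ i ∈ Finset.range n, (a n * b i - a i * b n) ^ 2 =
        b n ^ 2 * ∑ i ∈ Finset.range n, a i ^ 2 + a n ^ 2 * ∑ i ∈ Finset.range n, b i ^ 2 -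
          2 * (a n * b n) * ∑ i ∈ Finset.range n, a i * b i := by
      simp only [Finset.mul_sum, ← Finset.sum_add_distrib, ← Finset.sum_sub_distrib]
      exact Finset.sum_congr rfl fun i _ => by ring
    simp only [Finset.sum_range_succ _ n, ih, hlast]
    ring

theorem sum_range_sum_range_sq_eq_sum_sq_div_sub_sq_div {n : ℕ} {m : ℕ → ℝ}
    (hm : ∀ i < n, 0 < m i) (t : ℕ → ℝ) :
    ∑ j ∈ Finset.range n, ∑ i ∈ Finset.range j,
        (√(m j / ∑ k ∈ Finset.range n, m k) * ((√(m i))⁻¹ * t i) -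
          √(m i / ∑ k ∈ Finset.range n, m k) * ((√(m j))⁻¹ * t j)) ^ 2 =
      ∑ i ∈ Finset.range n, t i ^ 2 / m i -
        (∑ i ∈ Finset.range n, t i) ^ 2 / ∑ i ∈ Finset.range n, m i := by
  rcases Nat.eq_zero_or_pos n with rfl | hn
  · simp
  set M := ∑ k ∈ Finset.range n, m k
  have hM : 0 < M :=
    Finset.sum_pos (fun i hi => hm i (Finset.mem_range.1 hi)) (Finset.nonempty_range_iff.2 hn.ne')
  have hsq : ∀ i < n, √(m i) ^ 2 = m i := fun i hi => Real.sq_sqrt (hm i hi).le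
  have hterm : ∀ j < n, ∀ i < j,
      (√(m j / M) * ((√(m i))⁻¹ * t i) - √(m i / M) * ((√(m j))⁻¹ * t j)) ^ 2 =
        (√(m j) * ((√(m i))⁻¹ * t i) - √(m i) * ((√(m j))⁻¹ * t j)) ^ 2 / M := by
    intro j hj i hij
    rw [Real.sqrt_div (hm j hj).le, Real.sqrt_div (hm i (hij.trans hj)).le, div_mul_eq_mul_div,
      div_mul_eq_mul_div, div_sub_div_same, div_pow, Real.sq_sqrt hM.le]
  have hprod : ∀ i < n, √(m i) * ((√(m i))⁻¹ * t i) = t i := fun i hi => by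
    rw [← mul_assoc, mul_inv_cancel₀ (Real.sqrt_pos.2 (hm i hi)).ne', one_mul]
  have hquot : ∀ i < n, ((√(m i))⁻¹ * t i) ^ 2 = t i ^ 2 / m i := fun i hi => by
    rw [mul_pow, inv_pow, hsq i hi, inv_mul_eq_div]
  calc _ = (∑ j ∈ Finset.range n, ∑ i ∈ Finset.range j,
          (√(m j) * ((√(m i))⁻¹ * t i) - √(m i) * ((√(m j))⁻¹ * t j)) ^ 2) / M := by
        simp only [Finset.sum_div]
        refine Finset.sum_congr rfl fun j hj => Finset.sum_congr rfl fun i hi => ?_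
        exact hterm j (Finset.mem_range.1 hj) i (Finset.mem_range.1 hi)
    _ = (M * ∑ i ∈ Finset.range n, t i ^ 2 / m i - (∑ i ∈ Finset.range n, t i) ^ 2) / M := by
        rw [Finset.sum_range_sum_range_mul_sub_mul_sq]
        congr 2
        · congr 1
          · exact Finset.sum_congr rfl fun i hi => hsq i (Finset.mem_range.1 hi)
          · exact Finset.sum_congr rfl fun i hi => hquot i (Finset.mem_range.1 hi)
        · exact congrArg (· ^ 2) (Finset.sum_congr rfl fun i hi => hprod i (Finset.mem_range.1 hi))
    _ = _ := by field_simp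

section SetIntegral

variable {X ι : Type*} [MeasurableSpace X] {μ : Measure X} {f : X → ℝ}

theorem MeasureTheory.setIntegral_biUnion_finset₀ {s : Finset ι} {t : ι → Set X}
    (hd : (s : Set ι).Pairwise (AEDisjoint μ on t)) (hm : ∀ i ∈ s, NullMeasurableSet (t i) μ)
    (hf : IntegrableOn f (⋃ i ∈ s, t i) μ) :
    ∫ x in ⋃ i ∈ s, t i, f x ∂μ = ∑ i ∈ s, ∫ x in t i, f x ∂μ := by
  simp only [← Finset.mem_coe, Set.biUnion_eq_iUnion] at hf ⊢
  rw [integral_iUnion_ae (ι := (s : Set ι)) (fun i => hm i i.2) (hd.subtype _ _) hf,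
    ← Finset.tsum_subtype']

end SetIntegral

section GammaPsi

variable {X : Type*} [MeasureSpace X] {μ : Measure X} {g : X → ℝ} {B C C' : Set X}

theorem mul_gammaFn_eq_indicator :
    (fun x => g x * gammaFn C x) = C.indicator fun x => g x * (√(volume C).toReal)⁻¹ := by
  ext x
  by_cases hx : x ∈ C <;> simp [gammaFn, hx]

theorem integral_mul_gammaFn (hC : MeasurableSet C) :
    ∫ x, g x * gammaFn C x ∂μ = (√(volume C).toReal)⁻¹ * ∫ x in C, g x ∂μ := by
  rw [mul_gammaFn_eq_indicator, integral_indicator hC, integral_mul_const, mul_comm]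

theorem integrable_mul_gammaFn (hg : Integrable g μ) (hC : MeasurableSet C) :
    Integrable (fun x => g x * gammaFn C x) μ := by
  rw [mul_gammaFn_eq_indicator]
  exact (hg.mul_const _).indicator hC

theorem integral_mul_psiFn (hg : Integrable g μ) (hC : MeasurableSet C) (hC' : MeasurableSet C') :
    ∫ x, g x * psiFn B C C' x ∂μ =
      √((volume C').toReal / (volume B).toReal) * ((√(volume C).toReal)⁻¹ * ∫ x in C, g x ∂μ) -
        √((volume C).toReal / (volume B).toReal) *
          ((√(volume C').toReal)⁻¹ * ∫ x in C', g x ∂μ) := by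
  simp only [psiFn, mul_sub, mul_left_comm (g _)]
  rw [integral_sub ((integrable_mul_gammaFn hg hC).const_mul _)
      ((integrable_mul_gammaFn hg hC').const_mul _),
    integral_const_mul, integral_const_mul, integral_mul_gammaFn hC, integral_mul_gammaFn hC']

end GammaPsi

namespace HierarchicalPartition

variable {X : Type*} [MeasureSpace X] [PseudoEMetricSpace X] {K : Set X}
  (P : HierarchicalPartition X K) {j : ℕ} {B : Set X}

theorem subset_of_mem (hB : B ∈ P.part j) : B ⊆ K := by
  rw [← P.cover j]
  exact Set.subset_biUnion_of_mem (u := id) hB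

theorem child_subset (hB : B ∈ P.part j) {ℓ : ℕ} (hℓ : ℓ < P.numChild j B) :
    P.child j B ℓ ⊆ B := by
  conv_rhs => rw [P.child_union j B hB]
  exact Set.subset_biUnion_of_mem (Finset.mem_range.2 hℓ)

theorem measurableSet_carrier (P : HierarchicalPartition X K) : MeasurableSet K :=
  P.measurableSet 0 K (by rw [P.root]; exact Finset.mem_singleton_self K)

theorem volume_restrict_apply (hB : B ∈ P.part j) : volume.restrict K B = volume B := by
  rw [Measure.restrict_apply (P.measurableSet j B hB),
    Set.inter_eq_self_of_subset_left (P.subset_of_mem hB)]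

theorem volume_toReal_pos (hK : volume K ≠ ⊤) (hB : B ∈ P.part j) : 0 < (volume B).toReal :=
  ENNReal.toReal_pos (P.pos j B hB).ne'
    (ne_top_of_le_ne_top hK (measure_mono (P.subset_of_mem hB)))

theorem aedisjoint {ν : Measure X} (hν : ν ≤ volume) (hB : B ∈ P.part j) {B' : Set X}
    (hB' : B' ∈ P.part j) (hne : B ≠ B') : AEDisjoint ν B B' :=
  AEDisjoint.of_le (P.null_inter j B hB B' hB' hne) hν

theorem pairwise_aedisjoint_child {ν : Measure X} (hν : ν ≤ volume) (hB : B ∈ P.part j) :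
    (Finset.range (P.numChild j B) : Set ℕ).Pairwise (AEDisjoint ν on P.child j B) := by
  intro ℓ hℓ ℓ' hℓ' hne
  simp only [Finset.coe_range, Set.mem_Iio] at hℓ hℓ'
  exact P.aedisjoint hν (P.child_mem j B hB ℓ hℓ) (P.child_mem j B hB ℓ' hℓ')
    (P.child_ne j B hB ℓ hℓ ℓ' hℓ' hne)

theorem volume_eq_sum_child (hB : B ∈ P.part j) :
    volume B = ∑ ℓ ∈ Finset.range (P.numChild j B), volume (P.child j B ℓ) := by
  conv_lhs => rw [P.child_union j B hB]
  refine measure_biUnion_finset₀ (P.pairwise_aedisjoint_child le_rfl hB) fun ℓ hℓ => ?_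
  exact (P.measurableSet _ _ (P.child_mem j B hB ℓ (Finset.mem_range.1 hℓ))).nullMeasurableSet

theorem setIntegral_eq_sum_child {f : X → ℝ} (hf : Integrable f (volume.restrict K))
    (hB : B ∈ P.part j) :
    ∫ x in B, f x ∂volume.restrict K =
      ∑ ℓ ∈ Finset.range (P.numChild j B), ∫ x in P.child j B ℓ, f x ∂volume.restrict K := by
  conv_lhs => rw [P.child_union j B hB]
  refine setIntegral_biUnion_finset₀ (P.pairwise_aedisjoint_child Measure.restrict_le_self hB)
    (fun ℓ hℓ => ?_) hf.integrableOn
  exact (P.measurableSet _ _ (P.child_mem j B hB ℓ (Finset.mem_range.1 hℓ))).nullMeasurableSet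

theorem integral_eq_sum_setIntegral {f : X → ℝ} (hf : Integrable f (volume.restrict K)) (j : ℕ) :
    ∫ x, f x ∂volume.restrict K = ∑ B ∈ P.part j, ∫ x in B, f x ∂volume.restrict K := by
  have hK : ∫ x, f x ∂volume.restrict K = ∫ x in ⋃ B ∈ P.part j, B, f x ∂volume.restrict K := by
    rw [P.cover j, Measure.restrict_restrict P.measurableSet_carrier, Set.inter_self]
  rw [hK]
  refine setIntegral_biUnion_finset₀ (fun B hB B' hB' hne => ?_) (fun B hB => ?_) hf.integrableOn
  · exact P.aedisjoint Measure.restrict_le_self hB hB' hne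
  · exact (P.measurableSet j B hB).nullMeasurableSet

theorem child_injOn {B' : Set X} (hB : B ∈ P.part j) (hB' : B' ∈ P.part j) {ℓ ℓ' : ℕ}
    (hℓ : ℓ < P.numChild j B) (hℓ' : ℓ' < P.numChild j B')
    (heq : P.child j B ℓ = P.child j B' ℓ') : B = B' ∧ ℓ = ℓ' := by
  obtain rfl : B = B' := by
    by_contra hne
    have hsub : P.child j B ℓ ⊆ B ∩ B' :=
      Set.subset_inter (P.child_subset hB hℓ) (heq ▸ P.child_subset hB' hℓ')
    exact (P.pos _ _ (P.child_mem j B hB ℓ hℓ)).ne'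
      (measure_mono_null hsub (P.null_inter j B hB B' hB' hne))
  by_contra hne
  exact P.child_ne j B hB ℓ hℓ ℓ' hℓ' (fun h => hne ⟨rfl, h⟩) heq

theorem exists_child_eq {C : Set X} (hC : C ∈ P.part (j + 1)) :
    ∃ B ∈ P.part j, ∃ ℓ < P.numChild j B, P.child j B ℓ = C := by
  by_contra! hne
  have hcover : C ⊆ ⋃ B ∈ P.part j, ⋃ ℓ ∈ Finset.range (P.numChild j B), C ∩ P.child j B ℓ := by
    intro x hx
    obtain ⟨B, hB, hxB⟩ := Set.mem_iUnion₂.1 ((P.cover j).symm ▸ P.subset_of_mem hC hx)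
    obtain ⟨ℓ, hℓ, hxC⟩ := Set.mem_iUnion₂.1 ((P.child_union j B hB) ▸ hxB)
    exact Set.mem_iUnion₂.2 ⟨B, hB, Set.mem_iUnion₂.2 ⟨ℓ, hℓ, hx, hxC⟩⟩
  refine (P.pos _ C hC).ne' (measure_mono_null hcover ?_)
  refine (measure_biUnion_null_iff (Finset.countable_toSet _)).2 fun B hB => ?_
  refine (measure_biUnion_null_iff (Finset.countable_toSet _)).2 fun ℓ hℓ => ?_
  have hℓ : ℓ < P.numChild j B := Finset.mem_range.1 hℓ
  exact P.null_inter _ C hC _ (P.child_mem j B hB ℓ hℓ) (hne B hB ℓ hℓ).symm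

theorem sum_sum_child_eq_sum {M : Type*} [AddCommMonoid M] (F : Set X → M) (j : ℕ) :
    ∑ B ∈ P.part j, ∑ ℓ ∈ Finset.range (P.numChild j B), F (P.child j B ℓ) =
      ∑ C ∈ P.part (j + 1), F C := by
  rw [Finset.sum_sigma']
  refine Finset.sum_bij (fun p _ => P.child j p.1 p.2) ?_ ?_ ?_ (fun _ _ => rfl)
  · rintro ⟨B, ℓ⟩ hp
    obtain ⟨hB, hℓ⟩ := Finset.mem_sigma.1 hp
    exact P.child_mem j B hB ℓ (Finset.mem_range.1 hℓ)
  · rintro ⟨B, ℓ⟩ hp ⟨B', ℓ'⟩ hp' heq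
    obtain ⟨hB, hℓ⟩ := Finset.mem_sigma.1 hp
    obtain ⟨hB', hℓ'⟩ := Finset.mem_sigma.1 hp'
    obtain ⟨rfl, rfl⟩ :=
      P.child_injOn hB hB' (Finset.mem_range.1 hℓ) (Finset.mem_range.1 hℓ') heq
    rfl
  · intro C hC
    obtain ⟨B, hB, ℓ, hℓ, rfl⟩ := P.exists_child_eq hC
    exact ⟨⟨B, ℓ⟩, Finset.mem_sigma.2 ⟨hB, Finset.mem_range.2 hℓ⟩, rfl⟩

theorem ae_restrict_eq_const_of_mem_Vspace {f : Lp ℝ 2 (volume.restrict K)}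
    (hf : f ∈ Vspace P j) (hB : B ∈ P.part j) :
    ∃ c : ℝ, ∀ᵐ x ∂(volume.restrict K).restrict B, f x = c := by
  induction hf using Submodule.span_induction with
  | mem g hg =>
    obtain ⟨B', hB', hg⟩ := hg
    by_cases hBB' : B = B'
    · subst hBB'
      refine ⟨1, ?_⟩
      filter_upwards [ae_restrict_of_ae hg, ae_restrict_mem (P.measurableSet j B hB)] with x hx hxB
      simp [hx, hxB]
    · refine ⟨0, ?_⟩
      have hnull : (volume.restrict K).restrict B B' = 0 := by
        rw [Measure.restrict_apply' (P.measurableSet j B hB), Set.inter_comm]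
        exact P.aedisjoint Measure.restrict_le_self hB hB' hBB'
      filter_upwards [ae_restrict_of_ae hg, measure_eq_zero_iff_ae_notMem.1 hnull] with x hx hxB'
      simp [hx, hxB']
  | zero =>
    exact ⟨0, ae_restrict_of_ae (Lp.coeFn_zero ℝ 2 _)⟩
  | add g₁ g₂ _ _ h₁ h₂ =>
    obtain ⟨c₁, h₁⟩ := h₁
    obtain ⟨c₂, h₂⟩ := h₂
    refine ⟨c₁ + c₂, ?_⟩
    filter_upwards [ae_restrict_of_ae (Lp.coeFn_add g₁ g₂), h₁, h₂] with x hx hx₁ hx₂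
    rw [hx, Pi.add_apply, hx₁, hx₂]
  | smul a g _ h =>
    obtain ⟨c, h⟩ := h
    refine ⟨a * c, ?_⟩
    filter_upwards [ae_restrict_of_ae (Lp.coeFn_smul a g), h] with x hx hxc
    rw [hx, Pi.smul_apply, hxc, smul_eq_mul]

noncomputable def levelEnergy (f : X → ℝ) (j : ℕ) : ℝ :=
  ∑ B ∈ P.part j, (∫ x in B, f x ∂volume.restrict K) ^ 2 / (volume B).toReal

theorem levelEnergy_zero (f : X → ℝ) :
    P.levelEnergy f 0 = (∫ x, f x * gammaFn K x ∂volume.restrict K) ^ 2 := by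
  rw [levelEnergy, P.root, Finset.sum_singleton, integral_mul_gammaFn P.measurableSet_carrier,
    mul_pow, inv_pow, Real.sq_sqrt ENNReal.toReal_nonneg, inv_mul_eq_div]

theorem sum_sq_integral_mul_psiFn (hK : volume K ≠ ⊤) {f : X → ℝ}
    (hf : Integrable f (volume.restrict K)) (hB : B ∈ P.part j) :
    ∑ ℓ₂ ∈ Finset.range (P.numChild j B), ∑ ℓ₁ ∈ Finset.range ℓ₂,
        (∫ x, f x * psiFn B (P.child j B ℓ₁) (P.child j B ℓ₂) x ∂volume.restrict K) ^ 2 =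
      ∑ ℓ ∈ Finset.range (P.numChild j B),
          (∫ x in P.child j B ℓ, f x ∂volume.restrict K) ^ 2 / (volume (P.child j B ℓ)).toReal -
        (∫ x in B, f x ∂volume.restrict K) ^ 2 / (volume B).toReal := by
  have hchild : ∀ ℓ < P.numChild j B, P.child j B ℓ ∈ P.part (j + 1) := P.child_mem j B hB
  have hvol : (volume B).toReal =
      ∑ ℓ ∈ Finset.range (P.numChild j B), (volume (P.child j B ℓ)).toReal := by
    rw [P.volume_eq_sum_child hB, ENNReal.toReal_sum]
    exact fun ℓ hℓ => ne_top_of_le_ne_top hK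
      (measure_mono (P.subset_of_mem (hchild ℓ (Finset.mem_range.1 hℓ))))
  rw [hvol, P.setIntegral_eq_sum_child hf hB, ← sum_range_sum_range_sq_eq_sum_sq_div_sub_sq_div
    fun ℓ hℓ => P.volume_toReal_pos hK (hchild ℓ hℓ)]
  refine Finset.sum_congr rfl fun ℓ₂ h₂ => Finset.sum_congr rfl fun ℓ₁ h₁ => ?_
  have h₂ : ℓ₂ < P.numChild j B := Finset.mem_range.1 h₂
  rw [integral_mul_psiFn hf (P.measurableSet _ _ (hchild ℓ₁ ((Finset.mem_range.1 h₁).trans h₂)))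
    (P.measurableSet _ _ (hchild ℓ₂ h₂)), hvol]

theorem sum_part_sum_sq_integral_mul_psiFn (hK : volume K ≠ ⊤) {f : X → ℝ}
    (hf : Integrable f (volume.restrict K)) (j : ℕ) :
    ∑ B ∈ P.part j, ∑ ℓ₂ ∈ Finset.range (P.numChild j B), ∑ ℓ₁ ∈ Finset.range ℓ₂,
        (∫ x, f x * psiFn B (P.child j B ℓ₁) (P.child j B ℓ₂) x ∂volume.restrict K) ^ 2 =
      P.levelEnergy f (j + 1) - P.levelEnergy f j := by
  rw [Finset.sum_congr rfl fun B hB => P.sum_sq_integral_mul_psiFn hK hf hB,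
    Finset.sum_sub_distrib, P.sum_sum_child_eq_sum
      (fun C => (∫ x in C, f x ∂volume.restrict K) ^ 2 / (volume C).toReal)]
  rfl

theorem levelEnergy_eq_norm_sq_of_mem_Vspace (hK : volume K ≠ ⊤)
    {f : Lp ℝ 2 (volume.restrict K)} (hf : f ∈ Vspace P j) :
    P.levelEnergy f j = ‖f‖ ^ 2 := by
  have hnorm : ‖f‖ ^ 2 = ∫ x, f x ^ 2 ∂volume.restrict K := by
    rw [← real_inner_self_eq_norm_sq, L2.inner_def]
    simp [sq]
  rw [hnorm, P.integral_eq_sum_setIntegral (Lp.memLp f).integrable_sq j, levelEnergy]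
  refine Finset.sum_congr rfl fun B hB => ?_
  obtain ⟨c, hc⟩ := P.ae_restrict_eq_const_of_mem_Vspace hf hB
  have hvol : (volume.restrict K).real B = (volume B).toReal := by
    rw [measureReal_def, P.volume_restrict_apply hB]
  have hmean : ∫ x in B, f x ∂volume.restrict K = (volume B).toReal * c := by
    rw [integral_congr_ae hc, setIntegral_const, hvol, smul_eq_mul]
  have hsq : ∫ x in B, f x ^ 2 ∂volume.restrict K = (volume B).toReal * c ^ 2 := by
    rw [integral_congr_ae (hc.mono fun x (hx : f x = c) => congrArg (· ^ 2) hx),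
      setIntegral_const, hvol, smul_eq_mul]
  have hpos := P.volume_toReal_pos hK hB
  rw [hmean, hsq]
  field_simp

end HierarchicalPartition

theorem cutoff_system_tight_frame_for_VJ_general
    {d : ℕ} (K : Set (Fin d → ℝ)) (hK : IsCompact K)
    (P : HierarchicalPartition (Fin d → ℝ) K) (J : ℕ)
    (f : Lp ℝ 2 (volume.restrict K)) (hf : f ∈ Vspace P J) :
    ‖f‖ ^ 2 =
      (∫ x, f x * gammaFn K x ∂(volume.restrict K)) ^ 2 +
        ∑ j ∈ Finset.range J, ∑ B ∈ P.part j,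
          ∑ ℓ₂ ∈ Finset.range (P.numChild j B), ∑ ℓ₁ ∈ Finset.range ℓ₂,
            (∫ x, f x * psiFn B (P.child j B ℓ₁) (P.child j B ℓ₂) x ∂(volume.restrict K)) ^ 2 := by
  have hKfin : volume K ≠ ⊤ := hK.measure_lt_top.ne
  have := isFiniteMeasure_restrict.2 hKfin
  have hfint : Integrable f (volume.restrict K) := (Lp.memLp f).integrable one_le_two
  simp only [P.sum_part_sum_sq_integral_mul_psiFn hKfin hfint, Finset.sum_range_sub,
    ← P.levelEnergy_zero, P.levelEnergy_eq_norm_sq_of_mem_Vspace hKfin hf]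
  ring

/-- the cut-off system `X({B_j}_{j=0}^J) = {φ₀} ∪ ⋃_{j<J} ⋃_{B∈B_j} Ψ_{j,B}`
is a tight frame with frame constant 1 for `V_J = span{χ_B : B ∈ B_J}`: for every `f ∈ V_J`,
`‖f‖² = |⟨f, φ₀⟩|² + ∑_{j<J} ∑_{B ∈ B_j} ∑_{ℓ₁ < ℓ₂ ≤ c_B} |⟨f, ψ_{j,B}^{(ℓ₁,ℓ₂)}⟩|²`. -/
theorem cutoff_system_tight_frame_for_VJ
    {d : ℕ} (K : Set (Fin d → ℝ)) (hK : IsCompact K) (hKpos : 0 < volume K)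
    (P : HierarchicalPartition (Fin d → ℝ) K) (J : ℕ)
    (f : Lp ℝ 2 (volume.restrict K)) (hf : f ∈ Vspace P J) :
    ‖f‖ ^ 2 =
      (∫ x, f x * gammaFn K x ∂(volume.restrict K)) ^ 2 +
        ∑ j ∈ Finset.range J, ∑ B ∈ P.part j,
          ∑ ℓ₂ ∈ Finset.range (P.numChild j B), ∑ ℓ₁ ∈ Finset.range ℓ₂,
            (∫ x, f x * psiFn B (P.child j B ℓ₁) (P.child j B ℓ₂) x ∂(volume.restrict K)) ^ 2 :=
  cutoff_system_tight_frame_for_VJ_general K hK P J f hf
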